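/- arXiv:2505.16405 — 4 statements merged into one kernel-verified Lean document; each statement's English description precedes it below -/
import Mathlib

section
/- The function K_V(p) = log((E[V₀^p + V₁^p])^{1/p}) is non-increasing on the interval [1,2]; moreover, if E[V₀V₁] > 0 then K_V is strictly decreasing on [1,2]. -/
noncomputable section
open MeasureTheory ProbabilityTheory Filter Real

/-!
Write `I(p) = E[V^p + (1 - V)^p]` and `T = E[V (1 - V)]`, so that `K_V(p) = log I(p) / p`.
Since `I(p)` is the `p`-th moment of the measure `law(V) + law(1 - V)`, Hölder's inequality makes
`log I` convex. For a convex `f`, the bound `f(q) / q ≤ f(p) / p` on `p ≤ q ≤ 2` follows from its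
case `q = 2`, and there `I(2) = 1 - 2T` while `I(p) ≥ 1 - pT ≥ (1 - 2T)^(p/2)`, by a pointwise
second-order bound on `v^p` and Bernoulli's inequality. The last step is strict when `T > 0` and
`p < 2`.
-/

theorem sq_mul_one_add_le_rpow {v p : ℝ} (hv : 0 ≤ v) (hp : p ≤ 2) :
    v ^ 2 * (1 + (2 - p) * (1 - v)) ≤ v ^ p := by
  rcases hv.eq_or_lt with rfl | hv
  · simpa using rpow_nonneg le_rfl p
  have hexp : v ^ p = v ^ 2 * v ^ (p - 2) := by
    rw [← rpow_two, ← rpow_add hv]; ring_nf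
  -- `v ^ (p - 2) = exp ((p - 2) log v) ≥ 1 + (p - 2) log v ≥ 1 + (p - 2) (v - 1)`
  have hlower : 1 + (2 - p) * (1 - v) ≤ v ^ (p - 2) := by
    rw [rpow_def_of_pos hv]
    nlinarith [add_one_le_exp (log v * (p - 2)),
      mul_nonneg_of_nonpos_of_nonpos (sub_nonpos.2 (log_le_sub_one_of_pos hv)) (sub_nonpos.2 hp)]
  rw [hexp]
  gcongr

theorem one_sub_mul_le_rpow_add_rpow {v p : ℝ} (hv : v ∈ Set.Icc (0 : ℝ) 1) (hp : p ≤ 2) :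
    1 - p * (v * (1 - v)) ≤ v ^ p + (1 - v) ^ p := by
  have h₀ := sq_mul_one_add_le_rpow hv.1 hp
  have h₁ := sq_mul_one_add_le_rpow (sub_nonneg.2 hv.2) hp
  nlinarith

theorem half_rpow_le_rpow_add_rpow {v p : ℝ} (hv : v ∈ Set.Icc (0 : ℝ) 1) (hp : 0 ≤ p) :
    (1 / 2 : ℝ) ^ p ≤ v ^ p + (1 - v) ^ p := by
  have h₀ := rpow_nonneg hv.1 p
  have h₁ := rpow_nonneg (sub_nonneg.2 hv.2) p
  rcases le_total (1 / 2) v with hle | hle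
  · linarith [rpow_le_rpow (by norm_num) hle hp]
  · linarith [rpow_le_rpow (by norm_num) (by linarith : 1 / 2 ≤ 1 - v) hp]

theorem log_rpow_div_eq_log_div_two {x p : ℝ} (hx : 0 < x) (hp : p ≠ 0) :
    log (x ^ (p / 2)) / p = log x / 2 := by
  rw [log_rpow hx]
  field_simp

theorem ENNReal.lintegral_rpow_convexComb_le {α : Type*} [MeasurableSpace α] {μ : Measure α}
    {g : α → ENNReal} (hg : AEMeasurable g μ) {p r a b : ℝ} (hp : 0 ≤ p) (hr : 0 ≤ r)
    (ha : 0 ≤ a) (hb : 0 ≤ b) (hab : a + b = 1) :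
    ∫⁻ x, g x ^ (a * p + b * r) ∂μ ≤ (∫⁻ x, g x ^ p ∂μ) ^ a * (∫⁻ x, g x ^ r ∂μ) ^ b := by
  simp_rw [rpow_add_of_nonneg _ _ (mul_nonneg ha hp) (mul_nonneg hb hr), mul_comm a, mul_comm b,
    rpow_mul]
  exact lintegral_mul_norm_pow_le (hg.pow_const p) (hg.pow_const r) ha hb hab

theorem integral_rpow_convexComb_le {α : Type*} [MeasurableSpace α] {μ : Measure α}
    {g : α → ℝ} (hg : 0 ≤ᵐ[μ] g) (hgm : AEMeasurable g μ) {p r a b : ℝ} (hp : 0 ≤ p) (hr : 0 ≤ r)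
    (ha : 0 ≤ a) (hb : 0 ≤ b) (hab : a + b = 1)
    (hgp : Integrable (fun x => g x ^ p) μ) (hgr : Integrable (fun x => g x ^ r) μ) :
    ∫ x, g x ^ (a * p + b * r) ∂μ ≤ (∫ x, g x ^ p ∂μ) ^ a * (∫ x, g x ^ r ∂μ) ^ b := by
  have hq : 0 ≤ a * p + b * r := by positivity
  have toLintegral : ∀ {s : ℝ}, 0 ≤ s →
      ∫ x, g x ^ s ∂μ = (∫⁻ x, ENNReal.ofReal (g x) ^ s ∂μ).toReal := fun {s} hs => by
    rw [integral_eq_lintegral_of_nonneg_ae (hg.mono fun x hx => rpow_nonneg hx s)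
      (hgm.pow_const s).aestronglyMeasurable]
    congr 1
    exact lintegral_congr_ae (hg.mono fun x hx => (ENNReal.ofReal_rpow_of_nonneg hx hs).symm)
  have finite : ∀ {s : ℝ}, 0 ≤ s → Integrable (fun x => g x ^ s) μ →
      ∫⁻ x, ENNReal.ofReal (g x) ^ s ∂μ ≠ ⊤ := fun {s} hs hgs => by
    rw [← lintegral_congr_ae (hg.mono fun x hx => (ENNReal.ofReal_rpow_of_nonneg hx hs).symm)]
    exact hgs.lintegral_lt_top.ne
  rw [toLintegral hq, toLintegral hp, toLintegral hr, ENNReal.toReal_rpow, ENNReal.toReal_rpow,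
    ← ENNReal.toReal_mul]
  refine ENNReal.toReal_mono ?_ (ENNReal.lintegral_rpow_convexComb_le
    (ENNReal.measurable_ofReal.comp_aemeasurable hgm) hp hr ha hb hab)
  exact ENNReal.mul_ne_top (ENNReal.rpow_ne_top_of_nonneg ha (finite hp hgp))
    (ENNReal.rpow_ne_top_of_nonneg hb (finite hr hgr))

theorem integral_map_add_map {Ω : Type*} [MeasurableSpace Ω] {μ : Measure Ω} {X Y : Ω → ℝ}
    (hX : AEMeasurable X μ) (hY : AEMeasurable Y μ) {φ : ℝ → ℝ} (hφ : Measurable φ)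
    (hφX : Integrable (fun ω => φ (X ω)) μ) (hφY : Integrable (fun ω => φ (Y ω)) μ) :
    ∫ x, φ x ∂(μ.map X + μ.map Y) = ∫ ω, φ (X ω) + φ (Y ω) ∂μ := by
  rw [integral_add_measure ((integrable_map_measure hφ.aestronglyMeasurable hX).2 hφX)
      ((integrable_map_measure hφ.aestronglyMeasurable hY).2 hφY),
    integral_map hX hφ.aestronglyMeasurable, integral_map hY hφ.aestronglyMeasurable,
    integral_add hφX hφY]

theorem ConvexOn.antitoneOn_div_self {f : ℝ → ℝ} {a b : ℝ} (ha : 0 < a)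
    (hf : ConvexOn ℝ (Set.Icc a b) f) (hb : ∀ p ∈ Set.Icc a b, f b / b ≤ f p / p) :
    AntitoneOn (fun p => f p / p) (Set.Icc a b) := by
  intro p hp q hq hpq
  rcases hpq.eq_or_lt with rfl | hpq
  · rfl
  rcases hq.2.eq_or_lt with rfl | hqb
  · exact hb p hp
  have hp0 : 0 < p := ha.trans_le hp.1
  have hsec := hf.secant_mono_aux1 hp ⟨hp.1.trans hp.2, le_rfl⟩ hpq hqb
  have hend := hb p hp
  rw [div_le_div_iff₀ (hp0.trans (hpq.trans hqb)) hp0] at hend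
  rw [div_le_div_iff₀ (hp0.trans hpq) hp0]
  nlinarith

theorem ConvexOn.strictAntiOn_div_self {f : ℝ → ℝ} {a b : ℝ} (ha : 0 < a)
    (hf : ConvexOn ℝ (Set.Icc a b) f) (hb : ∀ p ∈ Set.Ico a b, f b / b < f p / p) :
    StrictAntiOn (fun p => f p / p) (Set.Icc a b) := by
  intro p hp q hq hpq
  rcases hq.2.eq_or_lt with rfl | hqb
  · exact hb p ⟨hp.1, hpq⟩
  have hp0 : 0 < p := ha.trans_le hp.1
  have hsec := hf.secant_mono_aux1 hp ⟨hp.1.trans hp.2, le_rfl⟩ hpq hqb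
  have hend := hb p ⟨hp.1, hpq.trans hqb⟩
  rw [div_lt_div_iff₀ (hp0.trans (hpq.trans hqb)) hp0] at hend
  rw [div_lt_div_iff₀ (hp0.trans hpq) hp0]
  nlinarith

theorem ae_one_sub_mem_Icc {α : Type*} [MeasurableSpace α] {μ : Measure α} {X : α → ℝ}
    (hrange : ∀ᵐ x ∂μ, X x ∈ Set.Icc (0 : ℝ) 1) : ∀ᵐ x ∂μ, 1 - X x ∈ Set.Icc (0 : ℝ) 1 :=
  hrange.mono fun _ hx => ⟨sub_nonneg.2 hx.2, sub_le_self 1 hx.1⟩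

theorem integrable_rpow_of_mem_Icc {α : Type*} [MeasurableSpace α] {μ : Measure α}
    [IsFiniteMeasure μ] {X : α → ℝ} (hX : AEMeasurable X μ)
    (hrange : ∀ᵐ x ∂μ, X x ∈ Set.Icc (0 : ℝ) 1) {p : ℝ} (hp : 0 ≤ p) :
    Integrable (fun x => X x ^ p) μ :=
  .of_mem_Icc 0 1 (hX.pow_const p) <| hrange.mono fun _ hx =>
    ⟨rpow_nonneg hx.1 p, rpow_le_one hx.1 hx.2 hp⟩

def powerMoment {Ω : Type*} [MeasurableSpace Ω] (P : Measure Ω) (V : Ω → ℝ) (p : ℝ) : ℝ :=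
  ∫ ω, V ω ^ p + (1 - V ω) ^ p ∂P

section powerMoment

variable {Ω : Type*} [MeasurableSpace Ω] {P : Measure Ω} [IsProbabilityMeasure P] {V : Ω → ℝ}
  (hV : Measurable V) (hrange : ∀ᵐ ω ∂P, V ω ∈ Set.Icc (0 : ℝ) 1)
include hV hrange

theorem integrable_rpow_add_one_sub_rpow {p : ℝ} (hp : 0 ≤ p) :
    Integrable (fun ω => V ω ^ p + (1 - V ω) ^ p) P :=
  (integrable_rpow_of_mem_Icc hV.aemeasurable hrange hp).add
    (integrable_rpow_of_mem_Icc (hV.const_sub 1).aemeasurable (ae_one_sub_mem_Icc hrange) hp)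

theorem integrable_mul_one_sub : Integrable (fun ω => V ω * (1 - V ω)) P :=
  .of_mem_Icc 0 1 (hV.mul (hV.const_sub 1)).aemeasurable <|
    hrange.mono fun _ hv => ⟨mul_nonneg hv.1 (sub_nonneg.2 hv.2), by nlinarith [hv.1, hv.2]⟩

theorem powerMoment_eq_integral_map_add_map {p : ℝ} (hp : 0 ≤ p) :
    powerMoment P V p = ∫ x, x ^ p ∂(P.map V + P.map (fun ω => 1 - V ω)) :=
  (integral_map_add_map hV.aemeasurable (hV.const_sub 1).aemeasurable
    (measurable_id.pow_const p) (integrable_rpow_of_mem_Icc hV.aemeasurable hrange hp)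
    (integrable_rpow_of_mem_Icc (hV.const_sub 1).aemeasurable
      (ae_one_sub_mem_Icc hrange) hp)).symm

theorem powerMoment_pos {p : ℝ} (hp : 0 ≤ p) : 0 < powerMoment P V p :=
  calc 0 < (1 / 2 : ℝ) ^ p := by positivity
    _ = ∫ _ω, (1 / 2 : ℝ) ^ p ∂P := by simp
    _ ≤ powerMoment P V p :=
      integral_mono_ae (integrable_const _) (integrable_rpow_add_one_sub_rpow hV hrange hp)
        (hrange.mono fun _ hv => half_rpow_le_rpow_add_rpow hv hp)

theorem convexOn_log_powerMoment :
    ConvexOn ℝ (Set.Ici 0) (fun p => log (powerMoment P V p)) := by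
  refine ⟨convex_Ici 0, fun p (hp : 0 ≤ p) r (hr : 0 ≤ r) a b ha hb hab => ?_⟩
  have hν : ∀ᵐ x ∂(P.map V + P.map (fun ω => 1 - V ω)), x ∈ Set.Icc (0 : ℝ) 1 :=
    ae_add_measure_iff.2 ⟨(ae_map_iff hV.aemeasurable measurableSet_Icc).2 hrange,
      (ae_map_iff (hV.const_sub 1).aemeasurable measurableSet_Icc).2 (ae_one_sub_mem_Icc hrange)⟩
  have hmoment :
      powerMoment P V (a * p + b * r) ≤ powerMoment P V p ^ a * powerMoment P V r ^ b := by
    rw [powerMoment_eq_integral_map_add_map hV hrange (by positivity),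
      powerMoment_eq_integral_map_add_map hV hrange hp,
      powerMoment_eq_integral_map_add_map hV hrange hr]
    exact integral_rpow_convexComb_le (hν.mono fun _ hx => hx.1) aemeasurable_id hp hr ha hb hab
      (integrable_rpow_of_mem_Icc aemeasurable_id hν hp)
      (integrable_rpow_of_mem_Icc aemeasurable_id hν hr)
  have hIp := powerMoment_pos hV hrange hp
  have hIr := powerMoment_pos hV hrange hr
  calc log (powerMoment P V (a * p + b * r))
      ≤ log (powerMoment P V p ^ a * powerMoment P V r ^ b) :=
        log_le_log (powerMoment_pos hV hrange (by positivity)) hmoment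
    _ = a * log (powerMoment P V p) + b * log (powerMoment P V r) := by
        rw [log_mul (by positivity) (by positivity), log_rpow hIp, log_rpow hIr]

theorem integral_one_sub_mul_mul_one_sub (c : ℝ) :
    ∫ ω, 1 - c * (V ω * (1 - V ω)) ∂P = 1 - c * ∫ ω, V ω * (1 - V ω) ∂P := by
  rw [integral_sub (integrable_const 1) ((integrable_mul_one_sub hV hrange).const_mul c),
    integral_const_mul]
  simp

theorem powerMoment_two : powerMoment P V 2 = 1 - 2 * ∫ ω, V ω * (1 - V ω) ∂P := by
  rw [← integral_one_sub_mul_mul_one_sub hV hrange]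
  refine integral_congr_ae (Eventually.of_forall fun ω => ?_)
  simp only [rpow_two]
  ring

theorem one_sub_mul_le_powerMoment {p : ℝ} (hp₀ : 0 ≤ p) (hp₂ : p ≤ 2) :
    1 - p * ∫ ω, V ω * (1 - V ω) ∂P ≤ powerMoment P V p := by
  rw [← integral_one_sub_mul_mul_one_sub hV hrange]
  exact integral_mono_ae ((integrable_const 1).sub ((integrable_mul_one_sub hV hrange).const_mul p))
    (integrable_rpow_add_one_sub_rpow hV hrange hp₀)
    (hrange.mono fun _ hv => one_sub_mul_le_rpow_add_rpow hv hp₂)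

theorem powerMoment_two_rpow_le {p : ℝ} (hp₀ : 0 ≤ p) (hp₂ : p ≤ 2) :
    powerMoment P V 2 ^ (p / 2) ≤ powerMoment P V p := by
  have hI₂ := powerMoment_pos hV hrange zero_le_two
  rw [powerMoment_two hV hrange] at hI₂ ⊢
  calc (1 - 2 * ∫ ω, V ω * (1 - V ω) ∂P) ^ (p / 2)
      ≤ 1 - p * ∫ ω, V ω * (1 - V ω) ∂P := by
        convert rpow_one_add_le_one_add_mul_self (s := -(2 * ∫ ω, V ω * (1 - V ω) ∂P))
          (by linarith) (p := p / 2) (by positivity) (by linarith) using 1 <;> ring_nf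
    _ ≤ powerMoment P V p := one_sub_mul_le_powerMoment hV hrange hp₀ hp₂

theorem powerMoment_two_rpow_lt (hT : 0 < ∫ ω, V ω * (1 - V ω) ∂P) {p : ℝ} (hp₀ : 0 < p)
    (hp₂ : p < 2) : powerMoment P V 2 ^ (p / 2) < powerMoment P V p := by
  have hI₂ := powerMoment_pos hV hrange zero_le_two
  rw [powerMoment_two hV hrange] at hI₂ ⊢
  calc (1 - 2 * ∫ ω, V ω * (1 - V ω) ∂P) ^ (p / 2)
      < 1 - p * ∫ ω, V ω * (1 - V ω) ∂P := by
        convert rpow_one_add_lt_one_add_mul_self (s := -(2 * ∫ ω, V ω * (1 - V ω) ∂P))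
          (by linarith) (by linarith) (p := p / 2) (by positivity) (by linarith) using 1 <;> ring_nf
    _ ≤ powerMoment P V p := one_sub_mul_le_powerMoment hV hrange hp₀.le hp₂.le

theorem log_powerMoment_two_div_two_le {p : ℝ} (hp₀ : 0 < p) (hp₂ : p ≤ 2) :
    log (powerMoment P V 2) / 2 ≤ log (powerMoment P V p) / p := by
  have hI₂ := powerMoment_pos hV hrange zero_le_two
  rw [← log_rpow_div_eq_log_div_two hI₂ hp₀.ne']
  exact div_le_div_of_nonneg_right
    (log_le_log (by positivity) (powerMoment_two_rpow_le hV hrange hp₀.le hp₂)) hp₀.le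

theorem log_powerMoment_two_div_two_lt (hT : 0 < ∫ ω, V ω * (1 - V ω) ∂P) {p : ℝ} (hp₀ : 0 < p)
    (hp₂ : p < 2) : log (powerMoment P V 2) / 2 < log (powerMoment P V p) / p := by
  have hI₂ := powerMoment_pos hV hrange zero_le_two
  rw [← log_rpow_div_eq_log_div_two hI₂ hp₀.ne']
  exact div_lt_div_of_pos_right
    (log_lt_log (by positivity) (powerMoment_two_rpow_lt hV hrange hT hp₀ hp₂)) hp₀

end powerMoment

/-- **Proposition (monotonicity of `K_V`).** For a random vector `V = (V₀, V₁)` with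
`V₀, V₁ ≥ 0` and `V₀ + V₁ = 1` a.s. (here `V = V₀` and `V₁ = 1 - V₀`), the function
`K_V(p) = log((E[V₀^p + V₁^p])^{1/p})` is non-increasing on `[1,2]`, and strictly
decreasing on `[1,2]` provided `E[V₀ V₁] > 0`. -/
theorem KV_antitone
    {Ω : Type*} [MeasurableSpace Ω] (P : Measure Ω) [IsProbabilityMeasure P]
    (V : Ω → ℝ) (hVmeas : Measurable V)
    (hrange : ∀ᵐ ω ∂P, V ω ∈ Set.Icc (0 : ℝ) 1) :
    AntitoneOn (fun p : ℝ =>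
        Real.log ((∫ ω, (V ω) ^ p + (1 - V ω) ^ p ∂P) ^ p⁻¹)) (Set.Icc 1 2) ∧
    (0 < ∫ ω, V ω * (1 - V ω) ∂P →
      StrictAntiOn (fun p : ℝ =>
        Real.log ((∫ ω, (V ω) ^ p + (1 - V ω) ^ p ∂P) ^ p⁻¹)) (Set.Icc 1 2)) := by
  have hK : (Set.Icc 1 2).EqOn (fun p => log (powerMoment P V p) / p)
      (fun p => log (powerMoment P V p ^ p⁻¹)) := fun p hp => by
    dsimp only
    rw [log_rpow (powerMoment_pos hVmeas hrange (by linarith [hp.1])), inv_mul_eq_div]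
  have hconv : ConvexOn ℝ (Set.Icc 1 2) (fun p => log (powerMoment P V p)) :=
    (convexOn_log_powerMoment hVmeas hrange).subset (fun p hp => zero_le_one.trans hp.1)
      (convex_Icc 1 2)
  refine ⟨(hconv.antitoneOn_div_self one_pos fun p hp => ?_).congr hK,
    fun hT => (hconv.strictAntiOn_div_self one_pos fun p hp => ?_).congr hK⟩
  · exact log_powerMoment_two_div_two_le hVmeas hrange (by linarith [hp.1]) hp.2
  · exact log_powerMoment_two_div_two_lt hVmeas hrange hT (by linarith [hp.1]) hp.2
end
end

section
/- Almost surely, lim_{n→∞} max_{|u|=n} Y(u) = 0, where for a binary word u with |u|=n one sets Y(u) = (2E[W₀²])^{−n} ∏_{j=1}^n W_{u_j}(u|_{j−1})². -/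
/-! Write `m = 2 E[W₀²]`. From `E[(W₀ - 1/2)²] ≥ 0` and `E[W₀ W₁] > 0` one gets `1/2 ≤ m < 1`,
and `E[W₀³ + W₁³] = (3m - 1)/2 < m^{3/2}`. By independence, `Σ_{|u|=n} Y(u)^{3/2}` has mean
`((3m - 1) / (2 m^{3/2}))ⁿ`, which is summable, so this sum tends to `0` almost surely; and
`max_{|u|=n} Y(u) ≤ (Σ_{|u|=n} Y(u)^{3/2})^{2/3}`. -/

noncomputable section
open MeasureTheory ProbabilityTheory Filter Asymptotics Real Topology
open scoped ENNReal NNReal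

namespace Microcascade

/-- `wbit b x` equals `x` (the value of `W₀`) if `b = false`, and `1 - x` (the value of
`W₁ = 1 - W₀`) if `b = true`. -/
def wbit (b : Bool) (x : ℝ) : ℝ := if b then 1 - x else x

/-- The left endpoint `ℓ_u = Σ_{k=1}^n u_k 2^{-k}` of the dyadic interval of the word
`u = u₁⋯u_n`, encoded as `v : Fin n → Bool`. -/
def lep {n : ℕ} (v : Fin n → Bool) : ℝ :=
  ∑ j : Fin n, if v j then ((2 : ℝ)⁻¹) ^ ((j : ℕ) + 1) else 0

/-- The dyadic interval `I_u = [ℓ_u, ℓ_u + 2^{-n})` of a word of length `n`. -/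
def dyad {n : ℕ} (v : Fin n → Bool) : Set ℝ :=
  Set.Ico (lep v) (lep v + (2 : ℝ)⁻¹ ^ n)

/-- The weight `2ⁿ W_{u₁}(∅) W_{u₂}(u|₁) ⋯ W_{u_n}(u|_{n-1})` of the word `u`,
for a family `W` of random variables indexed by finite binary words, where `W u` is
the first coordinate `W₀(u)` and `1 - W u` is the second coordinate `W₁(u)`. -/
def weight {Ω : Type*} (W : List Bool → Ω → ℝ) {n : ℕ} (v : Fin n → Bool) (ω : Ω) : ℝ :=
  ∏ j : Fin n, 2 * wbit (v j) (W ((List.ofFn v).take (j : ℕ)) ω)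

/-- The density `f_n = Σ_{|u|=n} 2ⁿ W_{u₁}(∅)⋯W_{u_n}(u|_{n-1}) 1_{I_u}`. -/
def dens {Ω : Type*} (W : List Bool → Ω → ℝ) (n : ℕ) (ω : Ω) (t : ℝ) : ℝ :=
  ∑ v : Fin n → Bool, weight W v ω * (dyad v).indicator (fun _ => (1 : ℝ)) t

/-- The random measure `μ_n` with Lebesgue density `f_n`. -/
def casc {Ω : Type*} (W : List Bool → Ω → ℝ) (n : ℕ) (ω : Ω) : Measure ℝ :=
  MeasureTheory.volume.withDensity fun t => ENNReal.ofReal (dens W n ω t)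

/-- The Fourier transform `μ̂(ζ) = ∫ e^{2πiζt} dμ(t)` of a measure on `ℝ`. -/
def FT (μ : Measure ℝ) (ζ : ℝ) : ℂ :=
  ∫ t, Complex.exp (2 * Real.pi * Complex.I * ζ * t) ∂μ

/-- `D_F = log₂(1/(2 E[W₀²]))`. -/
def DF {Ω : Type*} [MeasurableSpace Ω] (P : Measure Ω) (W0 : Ω → ℝ) : ℝ :=
  Real.logb 2 (1 / (2 * ∫ ω, (W0 ω) ^ 2 ∂P))

/-- `γ₊ = sup_{p>0} p⁻¹ log₂((E[W₀^p + W₁^p])⁻¹)`. -/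
def gammaPlus {Ω : Type*} [MeasurableSpace Ω] (P : Measure Ω) (W0 : Ω → ℝ) : ℝ :=
  sSup {x : ℝ | ∃ p : ℝ, 0 < p ∧
    x = Real.logb 2 ((∫ ω, (W0 ω) ^ p + (1 - W0 ω) ^ p ∂P)⁻¹) / p}

/-- `γ₋ = inf_{p>0} p⁻¹ log₂(E[W₀^{-p} + W₁^{-p}])`, regarded as a value in `(0, +∞]`:
if the expectation is infinite, the corresponding term is `+∞`. -/
def gammaMinus {Ω : Type*} [MeasurableSpace Ω] (P : Measure Ω) (W0 : Ω → ℝ) : ℝ≥0∞ :=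
  ⨅ (p : ℝ) (_ : 0 < p),
    (fun L : ℝ≥0∞ => if L = ⊤ then (⊤ : ℝ≥0∞) else ENNReal.ofReal (Real.logb 2 L.toReal / p))
      (∫⁻ ω, ENNReal.ofReal ((W0 ω) ^ (-p) + (1 - W0 ω) ^ (-p)) ∂P)

/-- The martingale `M_n^{(2)} = (2 E[W₀²])^{-n} Σ_{|u|=n} ∏_{j=1}^n W_{u_j}(u|_{j-1})²`. -/
def mart {Ω : Type*} [MeasurableSpace Ω] (P : Measure Ω) (W : List Bool → Ω → ℝ)
    (n : ℕ) (ω : Ω) : ℝ :=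
  ((2 * ∫ ω', (W [] ω') ^ 2 ∂P) ^ n)⁻¹ *
    ∑ v : Fin n → Bool, ∏ j : Fin n, (wbit (v j) (W ((List.ofFn v).take (j : ℕ)) ω)) ^ 2

/-- The filtration `ℱ_n = σ(W(u) : |u| ≤ n-1)`. -/
def filt {Ω : Type*} [MeasurableSpace Ω] (W : List Bool → Ω → ℝ) (n : ℕ) :
    MeasurableSpace Ω :=
  ⨆ u ∈ {u : List Bool | u.length ≤ n - 1}, MeasurableSpace.comap (W u) inferInstance

open Finset

lemma measurable_wbit (b : Bool) : Measurable (wbit b) := by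
  cases b
  · exact measurable_id
  · exact measurable_const.sub measurable_id

lemma wbit_mem_Ioo {b : Bool} {x : ℝ} (hx : x ∈ Set.Ioo (0 : ℝ) 1) :
    wbit b x ∈ Set.Ioo (0 : ℝ) 1 := by
  obtain ⟨h0, h1⟩ := hx
  cases b <;> simp only [wbit, Bool.false_eq_true, if_true, if_false] <;> constructor <;> linarith

lemma three_mul_sq_sub_one_div_two_lt_pow_three {s : ℝ} (h0 : 0 < s) (h1 : s < 1) :
    (3 * s ^ 2 - 1) / 2 < s ^ 3 := by
  nlinarith [mul_pos (pow_pos (sub_pos.2 h1) 2) (by linarith : 0 < 2 * s + 1)]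

lemma sq_le_rpow_sum_pow_three {ι : Type*} {s : Finset ι} {a : ι → ℝ} (ha : ∀ j ∈ s, 0 ≤ a j)
    {i : ι} (hi : i ∈ s) : a i ^ 2 ≤ (∑ j ∈ s, a j ^ 3) ^ ((2 : ℝ) / 3) := by
  calc a i ^ 2 = (a i ^ 3) ^ ((2 : ℝ) / 3) := by
        rw [← Real.rpow_natCast, ← Real.rpow_natCast, ← Real.rpow_mul (ha i hi)]
        norm_num
    _ ≤ (∑ j ∈ s, a j ^ 3) ^ ((2 : ℝ) / 3) :=
        Real.rpow_le_rpow (pow_nonneg (ha i hi) 3)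
          (single_le_sum (fun j hj => pow_nonneg (ha j hj) 3) hi) (by norm_num)

section Probability

variable {Ω : Type*} [MeasurableSpace Ω] {P : Measure Ω}

lemma ae_tendsto_zero_of_summable_integral {X : ℕ → Ω → ℝ} (hint : ∀ n, Integrable (X n) P)
    (hnn : ∀ n, 0 ≤ᵐ[P] X n) (hsum : Summable fun n => ∫ ω, X n ω ∂P) :
    ∀ᵐ ω ∂P, Tendsto (fun n => X n ω) atTop (𝓝 0) := by
  have hlint : ∫⁻ ω, ∑' n, ENNReal.ofReal (X n ω) ∂P ≠ ⊤ := by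
    rw [lintegral_tsum fun n => (hint n).aemeasurable.ennreal_ofReal]
    simp_rw [← ofReal_integral_eq_lintegral_ofReal (hint _) (hnn _)]
    rw [← ENNReal.ofReal_tsum_of_nonneg (fun n => integral_nonneg_of_ae (hnn n)) hsum]
    exact ENNReal.ofReal_ne_top
  have hfin := ae_lt_top' (AEMeasurable.tsum fun n =>
    (hint n).aemeasurable.ennreal_ofReal) hlint
  filter_upwards [hfin, ae_all_iff.2 hnn] with ω hω hωnn
  refine (ENNReal.summable_toReal hω.ne).tendsto_atTop_zero.congr fun n => ?_
  exact ENNReal.toReal_ofReal (hωnn n)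

variable [IsProbabilityMeasure P] {X : Ω → ℝ}

lemma integrable_pow_of_mem_Ioo (hXm : AEMeasurable X P)
    (hX : ∀ᵐ ω ∂P, X ω ∈ Set.Ioo (0 : ℝ) 1) (k : ℕ) : Integrable (fun ω => X ω ^ k) P := by
  refine Integrable.of_mem_Icc 0 1 (hXm.pow_const k) ?_
  filter_upwards [hX] with ω hω
  exact ⟨pow_nonneg hω.1.le k, pow_le_one₀ hω.1.le hω.2.le⟩

lemma integral_pos_of_ae_pos {f : Ω → ℝ} (hf : Integrable f P) (h : ∀ᵐ ω ∂P, 0 < f ω) :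
    0 < ∫ ω, f ω ∂P := by
  rw [integral_pos_iff_support_of_nonneg_ae (h.mono fun _ hω => hω.le) hf]
  calc (0 : ℝ≥0∞) < P Set.univ := by simp
    _ ≤ P (Function.support f) := measure_mono_ae (h.mono fun _ hω _ => hω.ne')

lemma two_mul_integral_sq_mem_Ico (hXm : AEMeasurable X P)
    (hX : ∀ᵐ ω ∂P, X ω ∈ Set.Ioo (0 : ℝ) 1) (hmean : ∫ ω, X ω ∂P = 1 / 2) :
    2 * ∫ ω, X ω ^ 2 ∂P ∈ Set.Ico (1 / 2 : ℝ) 1 := by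
  have hX1 := integrable_pow_of_mem_Ioo hXm hX 1
  have hX2 := integrable_pow_of_mem_Ioo hXm hX 2
  simp only [pow_one] at hX1
  have hvar : ∫ ω, (X ω - 1 / 2) ^ 2 ∂P = ∫ ω, X ω ^ 2 ∂P - 1 / 4 := by
    have h : (fun ω => (X ω - 1 / 2) ^ 2) = fun ω => (X ω ^ 2 - X ω) + 1 / 4 := by
      funext ω; ring
    rw [h, integral_add (f := fun ω => X ω ^ 2 - X ω) (hX2.sub hX1) (integrable_const _),
      integral_sub hX2 hX1, hmean, integral_const, probReal_univ, one_smul]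
    ring
  have hcross : ∫ ω, X ω - X ω ^ 2 ∂P = 1 / 2 - ∫ ω, X ω ^ 2 ∂P := by
    rw [integral_sub hX1 hX2, hmean]
  have hvar_nonneg : 0 ≤ ∫ ω, (X ω - 1 / 2) ^ 2 ∂P :=
    integral_nonneg fun ω => sq_nonneg (X ω - 1 / 2)
  have hcross_pos : 0 < ∫ ω, X ω - X ω ^ 2 ∂P := by
    refine integral_pos_of_ae_pos (f := fun ω => X ω - X ω ^ 2) (hX1.sub hX2) ?_
    filter_upwards [hX] with ω hω
    nlinarith [hω.1, hω.2]
  constructor <;> linarith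

lemma integral_pow_three_add_one_sub_pow_three (hXm : AEMeasurable X P)
    (hX : ∀ᵐ ω ∂P, X ω ∈ Set.Ioo (0 : ℝ) 1) (hmean : ∫ ω, X ω ∂P = 1 / 2) :
    ∫ ω, X ω ^ 3 + (1 - X ω) ^ 3 ∂P = (3 * (2 * ∫ ω, X ω ^ 2 ∂P) - 1) / 2 := by
  have hX1 := integrable_pow_of_mem_Ioo hXm hX 1
  have hX2 := integrable_pow_of_mem_Ioo hXm hX 2
  simp only [pow_one] at hX1
  have h : (fun ω => X ω ^ 3 + (1 - X ω) ^ 3) = fun ω => 1 - (3 * X ω - 3 * X ω ^ 2) := by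
    funext ω; ring
  rw [h, integral_sub (g := fun ω => 3 * X ω - 3 * X ω ^ 2) (integrable_const _)
      ((hX1.const_mul 3).sub (hX2.const_mul 3)),
    integral_sub (hX1.const_mul 3) (hX2.const_mul 3), integral_const_mul, integral_const_mul,
    hmean, integral_const, probReal_univ, one_smul]
  ring

end Probability

def pathProd {Ω : Type*} (W : List Bool → Ω → ℝ) {n : ℕ} (v : Fin n → Bool) (ω : Ω) : ℝ :=
  ∏ j : Fin n, wbit (v j) (W ((List.ofFn v).take j) ω)

lemma injective_take_ofFn {α : Type*} {n : ℕ} (v : Fin n → α) :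
    Function.Injective fun j : Fin n => (List.ofFn v).take j := by
  intro a b h
  simpa [Fin.ext_iff, a.isLt.le, b.isLt.le] using congrArg List.length h

lemma pathProd_mem_Icc {Ω : Type*} {W : List Bool → Ω → ℝ} {ω : Ω}
    (hω : ∀ u, W u ω ∈ Set.Ioo (0 : ℝ) 1) {n : ℕ} (v : Fin n → Bool) :
    pathProd W v ω ∈ Set.Icc (0 : ℝ) 1 :=
  ⟨prod_nonneg fun _ _ => (wbit_mem_Ioo (hω _)).1.le,
    prod_le_one (fun _ _ => (wbit_mem_Ioo (hω _)).1.le) fun _ _ => (wbit_mem_Ioo (hω _)).2.le⟩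

section Cascade

variable {Ω : Type*} [MeasurableSpace Ω] {P : Measure Ω} {W : List Bool → Ω → ℝ}

lemma measurable_pathProd (hmeas : ∀ u, Measurable (W u)) {n : ℕ} (v : Fin n → Bool) :
    Measurable (pathProd W v) :=
  Finset.measurable_prod _ fun _ _ => (measurable_wbit _).comp (hmeas _)

lemma integral_pathProd_pow (hmeas : ∀ u, Measurable (W u)) (hindep : iIndepFun W P)
    (hident : ∀ u, Measure.map (W u) P = Measure.map (W []) P) {n : ℕ} (v : Fin n → Bool)
    (k : ℕ) : ∫ ω, pathProd W v ω ^ k ∂P = ∏ j, ∫ ω, wbit (v j) (W [] ω) ^ k ∂P := by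
  have hf : ∀ b : Bool, Measurable fun x => wbit b x ^ k := fun b =>
    (measurable_wbit b).pow_const k
  simp_rw [pathProd, ← prod_pow]
  rw [(hindep.precomp (injective_take_ofFn v)).integral_fun_prod_comp
    (f := fun j x => wbit (v j) x ^ k) (fun _ => (hmeas _).aemeasurable)
    (fun j => (hf (v j)).aestronglyMeasurable)]
  refine prod_congr rfl fun j _ => ?_
  have hW : IdentDistrib (W ((List.ofFn v).take j)) (W []) P P :=
    ⟨(hmeas _).aemeasurable, (hmeas _).aemeasurable, hident _⟩
  exact (hW.comp (hf (v j))).integral_eq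

variable [IsProbabilityMeasure P]

lemma integrable_pathProd_pow (hmeas : ∀ u, Measurable (W u))
    (hrange : ∀ u, ∀ᵐ ω ∂P, W u ω ∈ Set.Ioo (0 : ℝ) 1) {n : ℕ} (v : Fin n → Bool) (k : ℕ) :
    Integrable (fun ω => pathProd W v ω ^ k) P := by
  refine Integrable.of_mem_Icc 0 1 ((measurable_pathProd hmeas v).pow_const k).aemeasurable ?_
  filter_upwards [ae_all_iff.2 hrange] with ω hω
  obtain ⟨h0, h1⟩ := pathProd_mem_Icc hω v
  exact ⟨pow_nonneg h0 k, pow_le_one₀ h0 h1⟩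

lemma integral_sum_pathProd_pow (hmeas : ∀ u, Measurable (W u)) (hindep : iIndepFun W P)
    (hident : ∀ u, Measure.map (W u) P = Measure.map (W []) P)
    (hrange : ∀ u, ∀ᵐ ω ∂P, W u ω ∈ Set.Ioo (0 : ℝ) 1) (n k : ℕ) :
    ∫ ω, ∑ v : Fin n → Bool, pathProd W v ω ^ k ∂P =
      (∫ ω, W [] ω ^ k + (1 - W [] ω) ^ k ∂P) ^ n := by
  have hW : ∀ b, Integrable (fun ω => wbit b (W [] ω) ^ k) P := fun b =>
    Integrable.of_mem_Icc 0 1 (((measurable_wbit b).comp (hmeas [])).pow_const k).aemeasurable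
      (by
        filter_upwards [hrange []] with ω hω
        obtain ⟨h0, h1⟩ := wbit_mem_Ioo (b := b) hω
        exact ⟨pow_nonneg h0.le k, pow_le_one₀ h0.le h1.le⟩)
  calc ∫ ω, ∑ v : Fin n → Bool, pathProd W v ω ^ k ∂P
      = ∑ v : Fin n → Bool, ∏ j, ∫ ω, wbit (v j) (W [] ω) ^ k ∂P := by
        rw [integral_finsetSum _ fun v _ => integrable_pathProd_pow hmeas hrange v k]
        simp_rw [integral_pathProd_pow hmeas hindep hident]
    _ = (∑ b : Bool, ∫ ω, wbit b (W [] ω) ^ k ∂P) ^ n :=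
        (Fintype.sum_pow (fun b => ∫ ω, wbit b (W [] ω) ^ k ∂P) n).symm
    _ = (∫ ω, W [] ω ^ k + (1 - W [] ω) ^ k ∂P) ^ n := by
        rw [Fintype.sum_bool, ← integral_add (hW true) (hW false)]
        simp only [wbit, if_true, Bool.false_eq_true, if_false, add_comm]

end Cascade

theorem max_Y_tendsto_zero_general
    {Ω : Type*} [MeasurableSpace Ω] (P : Measure Ω) [IsProbabilityMeasure P]
    (W : List Bool → Ω → ℝ)
    (hmeas : ∀ u, Measurable (W u))
    (hindep : iIndepFun W P)
    (hident : ∀ u, Measure.map (W u) P = Measure.map (W []) P)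
    (hrange : ∀ u, ∀ᵐ ω ∂P, W u ω ∈ Set.Ioo (0 : ℝ) 1)
    (hmean : ∫ ω, W [] ω ∂P = 1 / 2)
    :
    ∀ᵐ ω ∂P,
      Tendsto (fun n : ℕ =>
          Finset.sup' Finset.univ Finset.univ_nonempty
            (fun v : Fin n → Bool =>
              ((2 * ∫ ω', (W [] ω') ^ 2 ∂P) ^ n)⁻¹ *
                ∏ j : Fin n, (wbit (v j) (W ((List.ofFn v).take (j : ℕ)) ω)) ^ 2))
        atTop (𝓝 0) := by
  obtain ⟨hm_ge, hm_lt⟩ := two_mul_integral_sq_mem_Ico (hmeas []).aemeasurable (hrange []) hmean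
  set m := 2 * ∫ ω', W [] ω' ^ 2 ∂P
  set s := √m
  have hs_sq : s ^ 2 = m := Real.sq_sqrt (by linarith)
  have hs0 : 0 < s := Real.sqrt_pos.2 (by linarith)
  have hs1 : s < 1 := by nlinarith
  -- `T n = Σ_{|u|=n} Y(u)^{3/2}`
  set T : ℕ → Ω → ℝ := fun n ω => ∑ v : Fin n → Bool, (pathProd W v ω / s ^ n) ^ 3
  have hET : ∀ n, ∫ ω, T n ω ∂P = ((3 * s ^ 2 - 1) / 2 / s ^ 3) ^ n := by
    intro n
    simp only [T, div_pow, ← sum_div, integral_div,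
      integral_sum_pathProd_pow hmeas hindep hident hrange,
      integral_pow_three_add_one_sub_pow_three (hmeas []).aemeasurable (hrange []) hmean, hs_sq]
    ring
  have hT : ∀ᵐ ω ∂P, Tendsto (T · ω) atTop (𝓝 0) := by
    refine ae_tendsto_zero_of_summable_integral (fun n => ?_) (fun n => ?_) ?_
    · simp only [T, div_pow]
      exact integrable_finsetSum _ fun v _ =>
        (integrable_pathProd_pow hmeas hrange v 3).div_const _
    · filter_upwards [ae_all_iff.2 hrange] with ω hω
      exact sum_nonneg fun v _ =>
        pow_nonneg (div_nonneg (pathProd_mem_Icc hω v).1 (by positivity)) 3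
    · simp_rw [hET]
      exact summable_geometric_of_lt_one (div_nonneg (by linarith) (by positivity))
        ((div_lt_one (by positivity)).2 (three_mul_sq_sub_one_div_two_lt_pow_three hs0 hs1))
  filter_upwards [hT, ae_all_iff.2 hrange] with ω hTω hω
  refine squeeze_zero (fun n => le_sup'_of_le _ (mem_univ fun _ => false) (by positivity))
    (fun n => sup'_le _ _ fun v _ => ?_)
    (hTω.rpow_const_nhds_zero (by norm_num : (0 : ℝ) < 2 / 3))
  have hY : (m ^ n)⁻¹ * ∏ j : Fin n, wbit (v j) (W ((List.ofFn v).take j) ω) ^ 2 =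
      (pathProd W v ω / s ^ n) ^ 2 := by
    rw [div_pow, pathProd, prod_pow, ← pow_mul, mul_comm n, pow_mul, hs_sq, inv_mul_eq_div]
  rw [hY]
  exact sq_le_rpow_sum_pow_three (fun v _ => div_nonneg (pathProd_mem_Icc hω v).1 (by positivity))
    (mem_univ v)

/-- **Lemma.** Almost surely `lim_{n→∞} max_{|u|=n} Y(u) = 0`, where
`Y(u) = (2E[W₀²])^{-n} ∏_{j=1}^n W_{u_j}(u|_{j-1})²` for `|u| = n`. -/
theorem max_Y_tendsto_zero
    {Ω : Type*} [MeasurableSpace Ω] (P : Measure Ω) [IsProbabilityMeasure P]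
    (W : List Bool → Ω → ℝ)
    (hmeas : ∀ u, Measurable (W u))
    (hindep : iIndepFun W P)
    (hident : ∀ u, Measure.map (W u) P = Measure.map (W []) P)
    (hrange : ∀ u, ∀ᵐ ω ∂P, W u ω ∈ Set.Ioo (0 : ℝ) 1)
    (hmean : ∫ ω, W [] ω ∂P = 1 / 2)
    (hnd : ¬ (∀ᵐ ω ∂P, W [] ω = 1 / 2))
    :
    ∀ᵐ ω ∂P,
      Tendsto (fun n : ℕ =>
          Finset.sup' Finset.univ Finset.univ_nonempty
            (fun v : Fin n → Bool =>
              ((2 * ∫ ω', (W [] ω') ^ 2 ∂P) ^ n)⁻¹ *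
                ∏ j : Fin n, (wbit (v j) (W ((List.ofFn v).take (j : ℕ)) ω)) ^ 2))
        atTop (𝓝 0) :=
  max_Y_tendsto_zero_general P W hmeas hindep hident hrange hmean

end Microcascade
end
end

section
/- The exponent γ₊ = sup_{p>0} p^{−1} log₂((E[W₀^p + W₁^p])^{−1}) satisfies 0 < γ₊ < 1. -/
noncomputable section
open MeasureTheory ProbabilityTheory Filter Asymptotics Real Topology
open scoped ENNReal NNReal

namespace Microcascade

/-!
Write `m = max(W₀, W₁)`, so that `1/2 ≤ m ≤ 1` and `m^p ≤ W₀^p + W₁^p`. Jensen's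
inequality for `exp` gives `E[W₀^p + W₁^p] ≥ E[exp(p log m)] ≥ exp(p E[log m])`, so every
quantity in the supremum defining `γ₊` is at most `-E[log₂ m]`, and this is `< 1` because
`m > 1/2` wherever `W₀ ≠ 1/2`, which happens with positive probability. On the other side,
`x² + (1 - x)² < 1` on `(0, 1)`, so the quantity at `p = 2` is already positive.
-/

lemma half_le_max_self_one_sub (x : ℝ) : 1 / 2 ≤ max x (1 - x) :=
  le_max_iff.2 ((le_total (1 / 2) x).imp id fun h ↦ by linarith)

lemma half_lt_max_self_one_sub {x : ℝ} (hx : x ≠ 1 / 2) : 1 / 2 < max x (1 - x) :=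
  lt_max_iff.2 (hx.lt_or_gt.symm.imp id fun h ↦ by linarith)

lemma max_self_one_sub_pos (x : ℝ) : 0 < max x (1 - x) := by
  linarith [half_le_max_self_one_sub x]

lemma max_self_one_sub_le_one {x : ℝ} (hx : x ∈ Set.Icc (0 : ℝ) 1) : max x (1 - x) ≤ 1 :=
  max_le hx.2 (by linarith [hx.1])

lemma max_self_one_sub_rpow_le {x : ℝ} (hx : x ∈ Set.Icc (0 : ℝ) 1) (p : ℝ) :
    max x (1 - x) ^ p ≤ x ^ p + (1 - x) ^ p := by
  have h0 : 0 ≤ x ^ p := rpow_nonneg hx.1 p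
  have h1 : 0 ≤ (1 - x) ^ p := rpow_nonneg (by linarith [hx.2]) p
  rcases le_total x (1 - x) with h | h
  · rw [max_eq_right h]; linarith
  · rw [max_eq_left h]; linarith

lemma neg_log_two_le_log_max_self_one_sub (x : ℝ) : -log 2 ≤ log (max x (1 - x)) := by
  have h := log_le_log (by norm_num) (half_le_max_self_one_sub x)
  rwa [one_div, log_inv] at h

lemma neg_log_two_lt_log_max_self_one_sub {x : ℝ} (hx : x ≠ 1 / 2) :
    -log 2 < log (max x (1 - x)) := by
  have h := log_lt_log (by norm_num) (half_lt_max_self_one_sub hx)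
  rwa [one_div, log_inv] at h

lemma integral_pos_of_ae_nonneg_of_frequently_pos {α : Type*} [MeasurableSpace α]
    {μ : Measure α} {f : α → ℝ} (hf : 0 ≤ᵐ[μ] f) (hfi : Integrable f μ)
    (hpos : ∃ᵐ x ∂μ, 0 < f x) : 0 < ∫ x, f x ∂μ := by
  rw [integral_pos_iff_support_of_nonneg_ae hf hfi, pos_iff_ne_zero]
  exact fun h ↦ frequently_ae_iff.1 hpos (measure_mono_null (fun _ hx ↦ hx.ne') h)

section Moments

variable {Ω : Type*} [MeasurableSpace Ω] {P : Measure Ω} {W0 : Ω → ℝ}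

lemma integrable_rpow_add_one_sub_rpow [IsFiniteMeasure P] (hW : AEMeasurable W0 P)
    (hrange : ∀ᵐ ω ∂P, W0 ω ∈ Set.Icc (0 : ℝ) 1) {p : ℝ} (hp : 0 ≤ p) :
    Integrable (fun ω ↦ W0 ω ^ p + (1 - W0 ω) ^ p) P := by
  have hmeas : AEMeasurable (fun ω ↦ W0 ω ^ p + (1 - W0 ω) ^ p) P :=
    (hW.pow_const p).add ((aemeasurable_const.sub hW).pow_const p)
  refine .of_bound hmeas.aestronglyMeasurable 2 ?_
  filter_upwards [hrange] with ω hω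
  have h1 : 0 ≤ 1 - W0 ω := by linarith [hω.2]
  rw [Real.norm_of_nonneg (add_nonneg (rpow_nonneg hω.1 p) (rpow_nonneg h1 p))]
  linarith [rpow_le_one hω.1 hω.2 hp, rpow_le_one h1 (by linarith [hω.1]) hp]

lemma integrable_log_max_self_one_sub [IsFiniteMeasure P] (hW : AEMeasurable W0 P)
    (hrange : ∀ᵐ ω ∂P, W0 ω ∈ Set.Icc (0 : ℝ) 1) :
    Integrable (fun ω ↦ log (max (W0 ω) (1 - W0 ω))) P := by
  refine .of_bound (hW.max (aemeasurable_const.sub hW)).log.aestronglyMeasurable (log 2) ?_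
  filter_upwards [hrange] with ω hω
  rw [Real.norm_eq_abs, abs_le]
  exact ⟨neg_log_two_le_log_max_self_one_sub _,
    (log_nonpos (max_self_one_sub_pos _).le (max_self_one_sub_le_one hω)).trans
      (log_nonneg one_le_two)⟩

lemma mul_integral_log_max_le_log_integral_rpow [IsProbabilityMeasure P]
    (hW : AEMeasurable W0 P)
    (hrange : ∀ᵐ ω ∂P, W0 ω ∈ Set.Icc (0 : ℝ) 1) {p : ℝ} (hp : 0 ≤ p) :
    p * ∫ ω, log (max (W0 ω) (1 - W0 ω)) ∂P ≤ log (∫ ω, W0 ω ^ p + (1 - W0 ω) ^ p ∂P) := by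
  set m : Ω → ℝ := fun ω ↦ max (W0 ω) (1 - W0 ω)
  have hexp : ∀ ω, exp (p * log (m ω)) = m ω ^ p := fun ω ↦ by
    rw [rpow_def_of_pos (max_self_one_sub_pos _), mul_comm]
  have hmono : (fun ω ↦ m ω ^ p) ≤ᵐ[P] fun ω ↦ W0 ω ^ p + (1 - W0 ω) ^ p := by
    filter_upwards [hrange] with ω hω using max_self_one_sub_rpow_le hω p
  have hint := integrable_rpow_add_one_sub_rpow hW hrange hp
  have hmint : Integrable (fun ω ↦ m ω ^ p) P :=
    hint.mono' ((hW.max (aemeasurable_const.sub hW)).pow_const p).aestronglyMeasurable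
      (by filter_upwards [hmono] with ω hω
          rwa [Real.norm_of_nonneg (rpow_nonneg (max_self_one_sub_pos _).le p)])
  have hjensen : exp (∫ ω, p * log (m ω) ∂P) ≤ ∫ ω, exp (p * log (m ω)) ∂P :=
    convexOn_exp.map_integral_le continuous_exp.continuousOn isClosed_univ (by simp)
      ((integrable_log_max_self_one_sub hW hrange).const_mul p)
      (by simpa only [Function.comp_def, hexp] using hmint)
  simp only [integral_const_mul, hexp] at hjensen
  have hle := hjensen.trans (integral_mono_ae hmint hint hmono)
  exact (le_log_iff_exp_le ((exp_pos _).trans_le hle)).2 hle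

lemma logb_inv_integral_rpow_div_le [IsProbabilityMeasure P] (hW : AEMeasurable W0 P)
    (hrange : ∀ᵐ ω ∂P, W0 ω ∈ Set.Icc (0 : ℝ) 1) {p : ℝ} (hp : 0 < p) :
    logb 2 (∫ ω, W0 ω ^ p + (1 - W0 ω) ^ p ∂P)⁻¹ / p ≤
      -(∫ ω, log (max (W0 ω) (1 - W0 ω)) ∂P) / log 2 := by
  have hjensen := mul_integral_log_max_le_log_integral_rpow hW hrange hp.le
  rw [logb_inv, logb, div_le_iff₀ hp, div_mul_eq_mul_div, ← neg_div,
    div_le_div_iff_of_pos_right (log_pos one_lt_two)]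
  linarith

lemma neg_log_two_lt_integral_log_max [IsProbabilityMeasure P] (hW : AEMeasurable W0 P)
    (hrange : ∀ᵐ ω ∂P, W0 ω ∈ Set.Icc (0 : ℝ) 1) (hnd : ¬ ∀ᵐ ω ∂P, W0 ω = 1 / 2) :
    -log 2 < ∫ ω, log (max (W0 ω) (1 - W0 ω)) ∂P := by
  have hint := integrable_log_max_self_one_sub hW hrange
  have hpos : 0 < ∫ ω, log 2 + log (max (W0 ω) (1 - W0 ω)) ∂P := by
    refine integral_pos_of_ae_nonneg_of_frequently_pos
      (.of_forall fun ω ↦ by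
        dsimp only [Pi.zero_apply]; linarith [neg_log_two_le_log_max_self_one_sub (W0 ω)])
      ((integrable_const _).add hint) ((Filter.not_eventually.1 hnd).mono fun ω hω ↦ ?_)
    linarith [neg_log_two_lt_log_max_self_one_sub hω]
  rw [integral_add (integrable_const _) hint, integral_const, probReal_univ, one_smul] at hpos
  linarith

lemma integral_rpow_two_add_one_sub_rpow_two_mem_Ioo [IsProbabilityMeasure P]
    (hW : AEMeasurable W0 P) (hrange : ∀ᵐ ω ∂P, W0 ω ∈ Set.Ioo (0 : ℝ) 1) :
    ∫ ω, W0 ω ^ (2 : ℝ) + (1 - W0 ω) ^ (2 : ℝ) ∂P ∈ Set.Ioo 0 1 := by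
  have hint := integrable_rpow_add_one_sub_rpow hW
    (hrange.mono fun _ h ↦ Set.Ioo_subset_Icc_self h) zero_le_two
  have hmem : ∀ᵐ ω ∂P, W0 ω ^ (2 : ℝ) + (1 - W0 ω) ^ (2 : ℝ) ∈ Set.Ioo 0 1 := by
    filter_upwards [hrange] with ω hω
    rw [rpow_two, rpow_two]
    constructor <;> nlinarith [hω.1, hω.2]
  have hgap := integral_pos_of_ae_nonneg_of_frequently_pos
    (hmem.mono fun _ h ↦ (sub_pos.2 h.2).le) ((integrable_const 1).sub hint)
    (hmem.mono fun _ h ↦ sub_pos.2 h.2).frequently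
  rw [integral_sub (integrable_const 1) hint, integral_const, probReal_univ, one_smul] at hgap
  exact ⟨integral_pos_of_ae_nonneg_of_frequently_pos (hmem.mono fun _ h ↦ h.1.le) hint
    (hmem.mono fun _ h ↦ h.1).frequently, by linarith⟩

lemma logb_inv_integral_rpow_div_le_gammaPlus [IsProbabilityMeasure P]
    (hW : AEMeasurable W0 P)
    (hrange : ∀ᵐ ω ∂P, W0 ω ∈ Set.Icc (0 : ℝ) 1) {p : ℝ} (hp : 0 < p) :
    logb 2 (∫ ω, W0 ω ^ p + (1 - W0 ω) ^ p ∂P)⁻¹ / p ≤ gammaPlus P W0 :=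
  le_csSup ⟨_, fun _ ⟨_, hq, hx⟩ ↦ hx ▸ logb_inv_integral_rpow_div_le hW hrange hq⟩ ⟨p, hp, rfl⟩

lemma gammaPlus_le [IsProbabilityMeasure P] (hW : AEMeasurable W0 P)
    (hrange : ∀ᵐ ω ∂P, W0 ω ∈ Set.Icc (0 : ℝ) 1) :
    gammaPlus P W0 ≤ -(∫ ω, log (max (W0 ω) (1 - W0 ω)) ∂P) / log 2 :=
  csSup_le ⟨_, 1, one_pos, rfl⟩ fun _ ⟨_, hp, hx⟩ ↦
    hx ▸ logb_inv_integral_rpow_div_le hW hrange hp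

end Moments

theorem gammaPlus_mem_Ioo_general
    {Ω : Type*} [MeasurableSpace Ω] (P : Measure Ω) [IsProbabilityMeasure P]
    (W0 : Ω → ℝ) (hmeas : Measurable W0)
    (hrange : ∀ᵐ ω ∂P, W0 ω ∈ Set.Ioo (0 : ℝ) 1)
    (hnd : ¬ (∀ᵐ ω ∂P, W0 ω = 1 / 2)) :
    0 < gammaPlus P W0 ∧ gammaPlus P W0 < 1 := by
  have hW := hmeas.aemeasurable (μ := P)
  have hIcc : ∀ᵐ ω ∂P, W0 ω ∈ Set.Icc (0 : ℝ) 1 :=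
    hrange.mono fun _ h ↦ Set.Ioo_subset_Icc_self h
  constructor
  · obtain ⟨hI2pos, hI2lt⟩ := integral_rpow_two_add_one_sub_rpow_two_mem_Ioo hW hrange
    refine lt_of_lt_of_le ?_ (logb_inv_integral_rpow_div_le_gammaPlus hW hIcc two_pos)
    exact div_pos (logb_pos one_lt_two ((one_lt_inv₀ hI2pos).2 hI2lt)) two_pos
  · refine (gammaPlus_le hW hIcc).trans_lt ?_
    rw [div_lt_one (log_pos one_lt_two)]
    linarith [neg_log_two_lt_integral_log_max hW hIcc hnd]

/-- **Lemma.** The exponent `γ₊ = sup_{p>0} p⁻¹ log₂((E[W₀^p + W₁^p])⁻¹)` satisfies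
`0 < γ₊ < 1`. -/
theorem gammaPlus_mem_Ioo
    {Ω : Type*} [MeasurableSpace Ω] (P : Measure Ω) [IsProbabilityMeasure P]
    (W0 : Ω → ℝ) (hmeas : Measurable W0)
    (hrange : ∀ᵐ ω ∂P, W0 ω ∈ Set.Ioo (0 : ℝ) 1)
    (hmean : ∫ ω, W0 ω ∂P = 1 / 2)
    (hnd : ¬ (∀ᵐ ω ∂P, W0 ω = 1 / 2)) :
    0 < gammaPlus P W0 ∧ gammaPlus P W0 < 1 :=
  gammaPlus_mem_Ioo_general P W0 hmeas hrange hnd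

end Microcascade
end
end

section
/- The exponent γ₋ = inf_{p>0} p^{−1} log₂(E[W₀^{−p} + W₁^{−p}]), regarded as a value in (0, +∞] (with the convention log(+∞) = +∞), satisfies γ₋ > 1. -/
noncomputable section
open MeasureTheory ProbabilityTheory Filter Asymptotics Real Topology
open scoped ENNReal NNReal

namespace Microcascade

/-! The AM–GM inequality gives `W₀^{-p} + W₁^{-p} ≥ 2^{p+1}` pointwise, so every term of the
infimum is at least `1 + 1/p`; this controls small `p`. For large `p`, non-degeneracy provides
`ε > 0` and an event of probability `δ > 0` on which `min(W₀, W₁) ≤ 1/2 - ε`, so the expectation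
is at least `δ (1/2 - ε)^{-p}` and the term is at least `log₂ (1/2 - ε)⁻¹ + log₂ δ / p`, whose
limit exceeds `1`. -/

def negMoment {Ω : Type*} [MeasurableSpace Ω] (P : Measure Ω) (W0 : Ω → ℝ) (p : ℝ) : ℝ≥0∞ :=
  ∫⁻ ω, ENNReal.ofReal ((W0 ω) ^ (-p) + (1 - W0 ω) ^ (-p)) ∂P

section RealInequalities

variable {p x : ℝ}

theorem two_rpow_add_one_le_rpow_neg_add_rpow_neg (hp : 0 ≤ p) (hx₀ : 0 < x) (hx₁ : x < 1) :
    (2 : ℝ) ^ (p + 1) ≤ x ^ (-p) + (1 - x) ^ (-p) := by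
  have hy : 0 < 1 - x := by linarith
  have hprod : ((2 : ℝ) ^ p) ^ 2 ≤ x ^ (-p) * (1 - x) ^ (-p) := calc
    ((2 : ℝ) ^ p) ^ 2 = (1 / 4 : ℝ) ^ (-p) := by
      rw [Real.rpow_neg (by norm_num), ← Real.inv_rpow (by norm_num), one_div, inv_inv,
        ← Real.rpow_natCast, ← Real.rpow_mul (by norm_num), mul_comm, Real.rpow_mul (by norm_num)]
      norm_num
    _ ≤ (x * (1 - x)) ^ (-p) :=
      Real.rpow_le_rpow_of_nonpos (by positivity) (by nlinarith [sq_nonneg (x - 1 / 2)])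
        (by linarith)
    _ = x ^ (-p) * (1 - x) ^ (-p) := Real.mul_rpow hx₀.le hy.le
  rw [Real.rpow_add_one two_ne_zero]
  nlinarith [sq_nonneg (x ^ (-p) - (1 - x) ^ (-p)), Real.rpow_pos_of_pos hx₀ (-p),
    Real.rpow_pos_of_pos hy (-p), Real.rpow_pos_of_pos two_pos p]

theorem rpow_neg_le_rpow_neg_add_rpow_neg_of_le_abs_sub_half {ε : ℝ} (hp : 0 ≤ p) (hx₀ : 0 < x)
    (hx₁ : x < 1) (hε : ε ≤ |x - 1 / 2|) :
    (1 / 2 - ε) ^ (-p) ≤ x ^ (-p) + (1 - x) ^ (-p) := by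
  have hy : 0 < 1 - x := by linarith
  have hnp : -p ≤ 0 := by linarith
  rcases abs_cases (x - 1 / 2) with ⟨habs, -⟩ | ⟨habs, -⟩
  · have := Real.rpow_le_rpow_of_nonpos hy (by linarith) hnp (z := -p) (y := 1 / 2 - ε)
    linarith [Real.rpow_pos_of_pos hx₀ (-p)]
  · have := Real.rpow_le_rpow_of_nonpos hx₀ (by linarith) hnp (z := -p) (y := 1 / 2 - ε)
    linarith [Real.rpow_pos_of_pos hy (-p)]

theorem logb_add_logb_div_le_logb_div {a b c L : ℝ} (ha : 1 < a) (hp : 0 < p) (hb : 0 < b)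
    (hc : 0 < c) (h : c * b ^ p ≤ L) : logb a b + logb a c / p ≤ logb a L / p := by
  have hlog : logb a c + p * logb a b ≤ logb a L := by
    rw [← Real.logb_rpow_eq_mul_logb_of_pos hb,
      ← Real.logb_mul hc.ne' (Real.rpow_pos_of_pos hb p).ne']
    exact Real.logb_le_logb_of_le ha (by positivity) h
  rw [le_div_iff₀ hp, add_mul, div_mul_cancel₀ _ hp.ne']
  linarith

theorem exists_pos_forall_one_add_le_max {a b : ℝ} (ha : 1 < a) (hb : b ≤ 0) :
    ∃ m > 0, ∀ p > 0, 1 + m ≤ max (1 + 1 / p) (a + b / p) := by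
  have hlim : Tendsto (fun q : ℝ => a + b / q) atTop (𝓝 a) := by
    simpa using (tendsto_const_nhds (x := a)).add
      ((tendsto_const_nhds (x := b)).div_atTop tendsto_id)
  obtain ⟨q, hq, hq₀⟩ := ((hlim.eventually (lt_mem_nhds ha)).and (eventually_gt_atTop 0)).exists
  refine ⟨min (1 / q) (a + b / q - 1), lt_min (by positivity) (by linarith), fun p hp => ?_⟩
  rcases le_total p q with hpq | hqp
  · have : 1 / q ≤ 1 / p := one_div_le_one_div_of_le hp hpq
    exact le_max_of_le_left (by linarith [min_le_left (1 / q) (a + b / q - 1)])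
  · have : b / q ≤ b / p := by
      simpa only [neg_div, neg_le_neg_iff] using
        div_le_div_of_nonneg_left (neg_nonneg.2 hb) hq₀ hqp
    exact le_max_of_le_right (by linarith [min_le_right (1 / q) (a + b / q - 1)])

end RealInequalities

theorem exists_pos_measure_le_dist_ne_zero {α E : Type*} [MeasurableSpace α] [MetricSpace E]
    {μ : Measure α} {f : α → E} {c : E} (h : ¬ ∀ᵐ ω ∂μ, f ω = c) :
    ∃ ε > 0, μ {ω | ε ≤ dist (f ω) c} ≠ 0 := by
  by_contra! hnull
  refine h (ae_iff.2 (measure_mono_null (fun ω hω => ?_) (measure_iUnion_null fun n : ℕ =>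
    hnull (1 / ((n : ℝ) + 1)) (by positivity))))
  obtain ⟨n, hn⟩ := exists_nat_one_div_lt (dist_pos.2 hω)
  exact Set.mem_iUnion.2 ⟨n, hn.le⟩

section NegMoment

variable {Ω : Type*} [MeasurableSpace Ω] {P : Measure Ω} {W0 : Ω → ℝ} {p : ℝ}

theorem one_add_inv_le_logb_negMoment_div [IsProbabilityMeasure P]
    (hrange : ∀ᵐ ω ∂P, W0 ω ∈ Set.Ioo (0 : ℝ) 1) (hp : 0 < p) (hL : negMoment P W0 p ≠ ⊤) :
    1 + 1 / p ≤ logb 2 (negMoment P W0 p).toReal / p := by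
  have h : ENNReal.ofReal (2 ^ (p + 1)) ≤ negMoment P W0 p := calc
    ENNReal.ofReal (2 ^ (p + 1)) = ∫⁻ _, ENNReal.ofReal (2 ^ (p + 1)) ∂P := by simp
    _ ≤ negMoment P W0 p := lintegral_mono_ae <| by
      filter_upwards [hrange] with ω hω
      exact ENNReal.ofReal_le_ofReal (two_rpow_add_one_le_rpow_neg_add_rpow_neg hp.le hω.1 hω.2)
  rw [ENNReal.ofReal_le_iff_le_toReal hL, Real.rpow_add_one two_ne_zero, mul_comm] at h
  simpa only [Real.logb_self_eq_one one_lt_two] using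
    logb_add_logb_div_le_logb_div one_lt_two hp two_pos two_pos h

theorem logb_inv_add_logb_measureReal_div_le_logb_negMoment_div (hmeas : Measurable W0)
    (hrange : ∀ᵐ ω ∂P, W0 ω ∈ Set.Ioo (0 : ℝ) 1) (hp : 0 < p) (hL : negMoment P W0 p ≠ ⊤)
    {ε : ℝ} (hε : ε < 1 / 2) (hA : 0 < P.real {ω | ε ≤ |W0 ω - 1 / 2|}) :
    logb 2 (1 / 2 - ε)⁻¹ + logb 2 (P.real {ω | ε ≤ |W0 ω - 1 / 2|}) / p ≤
      logb 2 (negMoment P W0 p).toReal / p := by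
  have hr : 0 < 1 / 2 - ε := by linarith
  have h : ENNReal.ofReal ((1 / 2 - ε) ^ (-p)) * P {ω | ε ≤ |W0 ω - 1 / 2|} ≤
      negMoment P W0 p := by
    refine le_trans (mul_le_mul_right (measure_mono_ae ?_) _)
      (mul_meas_ge_le_lintegral₀ (by fun_prop) _)
    filter_upwards [hrange] with ω hω hε
    exact ENNReal.ofReal_le_ofReal
      (rpow_neg_le_rpow_neg_add_rpow_neg_of_le_abs_sub_half hp.le hω.1 hω.2 hε)
  replace h := ENNReal.toReal_mono hL h
  rw [ENNReal.toReal_mul, ENNReal.toReal_ofReal (Real.rpow_nonneg hr.le _), Real.rpow_neg hr.le,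
    ← Real.inv_rpow hr.le, mul_comm] at h
  exact logb_add_logb_div_le_logb_div one_lt_two hp (inv_pos.2 hr) hA h

theorem le_gammaMinus {c : ℝ≥0∞}
    (h : ∀ p > 0, negMoment P W0 p ≠ ⊤ →
      c ≤ ENNReal.ofReal (logb 2 (negMoment P W0 p).toReal / p)) :
    c ≤ gammaMinus P W0 :=
  le_iInf₂ fun p hp => by
    dsimp only
    split_ifs with hL
    · exact le_top
    · exact h p hp hL

end NegMoment

theorem one_lt_gammaMinus_general
    {Ω : Type*} [MeasurableSpace Ω] (P : Measure Ω) [IsProbabilityMeasure P]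
    (W0 : Ω → ℝ) (hmeas : Measurable W0)
    (hrange : ∀ᵐ ω ∂P, W0 ω ∈ Set.Ioo (0 : ℝ) 1)
    (hnd : ¬ (∀ᵐ ω ∂P, W0 ω = 1 / 2)) :
    (1 : ℝ≥0∞) < gammaMinus P W0 := by
  obtain ⟨ε₀, hε₀, hA₀⟩ := exists_pos_measure_le_dist_ne_zero hnd
  set ε := min ε₀ (1 / 4)
  have hε : 0 < ε := lt_min hε₀ (by norm_num)
  have hε' : ε < 1 / 2 := by linarith [min_le_right ε₀ (1 / 4)]
  set δ := P.real {ω | ε ≤ |W0 ω - 1 / 2|}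
  have hδ : 0 < δ := by
    refine ENNReal.toReal_pos (fun h => hA₀ (measure_mono_null ?_ h)) (measure_ne_top _ _)
    exact fun ω (hω : ε₀ ≤ dist (W0 ω) (1 / 2)) =>
      (min_le_left _ _).trans (by rwa [Real.dist_eq] at hω)
  have ha : 1 < logb 2 (1 / 2 - ε)⁻¹ := by
    rw [Real.lt_logb_iff_rpow_lt one_lt_two (inv_pos.2 (by linarith)), Real.rpow_one,
      lt_inv_comm₀ two_pos (by linarith)]
    linarith
  obtain ⟨m, hm, hmax⟩ :=
    exists_pos_forall_one_add_le_max ha (Real.logb_nonpos one_lt_two hδ.le measureReal_le_one)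
  calc (1 : ℝ≥0∞) < ENNReal.ofReal (1 + m) := by simpa using hm
    _ ≤ gammaMinus P W0 := le_gammaMinus fun p hp hL => ENNReal.ofReal_le_ofReal <|
        (hmax p hp).trans <| max_le (one_add_inv_le_logb_negMoment_div hrange hp hL)
          (logb_inv_add_logb_measureReal_div_le_logb_negMoment_div hmeas hrange hp hL hε' hδ)

/-- **Lemma.** The exponent `γ₋ = inf_{p>0} p⁻¹ log₂(E[W₀^{-p} + W₁^{-p}])`, regarded as a
value in `(0, +∞]` (terms with infinite expectation being `+∞`), satisfies `γ₋ > 1`. -/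
theorem one_lt_gammaMinus
    {Ω : Type*} [MeasurableSpace Ω] (P : Measure Ω) [IsProbabilityMeasure P]
    (W0 : Ω → ℝ) (hmeas : Measurable W0)
    (hrange : ∀ᵐ ω ∂P, W0 ω ∈ Set.Ioo (0 : ℝ) 1)
    (hmean : ∫ ω, W0 ω ∂P = 1 / 2)
    (hnd : ¬ (∀ᵐ ω ∂P, W0 ω = 1 / 2)) :
    (1 : ℝ≥0∞) < gammaMinus P W0 :=
  one_lt_gammaMinus_general P W0 hmeas hrange hnd

end Microcascade
end
end
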